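/- arXiv:1602.05850 — 7 statements merged into one kernel-verified Lean document; each statement's English description precedes it below -/
import Mathlib

section
/- Let t ∈ ℚ with t ∉ {−1, 0, 1}, and let a, b, U, V ∈ ℚ satisfy U² = a t² + b t + a and V² = a t⁶ + b t³ + a. Then a t¹⁰ + b t⁵ + a = −t²(t⁴ + 1)U² + (1 + t² + t⁴)V². Consequently, a point (t⁵, R) with R ∈ ℚ lies on the conic y² = a x² + b x + a if and only if R² = −t²(t⁴ + 1)U² + (1 + t² + t⁴)V². -/
/-- If `(t, U)` and `(t³, V)` are rational points on the conic
`y² = a·x² + b·x + a`, with `t ∉ {-1, 0, 1}`, then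
`a·t¹⁰ + b·t⁵ + a = -t²(t⁴+1)U² + (1+t²+t⁴)V²`; consequently `(t⁵, R)` lies on
the conic if and only if `R² = -t²(t⁴+1)U² + (1+t²+t⁴)V²`. -/
theorem fifth_power_point_condition
    (t a b U V : ℚ) (ht1 : t ≠ -1) (ht0 : t ≠ 0) (ht2 : t ≠ 1)
    (hU : U ^ 2 = a * t ^ 2 + b * t + a)
    (hV : V ^ 2 = a * t ^ 6 + b * t ^ 3 + a) :
    a * t ^ 10 + b * t ^ 5 + a
      = -t ^ 2 * (t ^ 4 + 1) * U ^ 2 + (1 + t ^ 2 + t ^ 4) * V ^ 2 ∧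
    ∀ R : ℚ, R ^ 2 = a * (t ^ 5) ^ 2 + b * t ^ 5 + a ↔
      R ^ 2 = -t ^ 2 * (t ^ 4 + 1) * U ^ 2 + (1 + t ^ 2 + t ^ 4) * V ^ 2 := by
  have key : a * t ^ 10 + b * t ^ 5 + a
      = -t ^ 2 * (t ^ 4 + 1) * U ^ 2 + (1 + t ^ 2 + t ^ 4) * V ^ 2 := by
    rw [hU, hV]; ring
  exact ⟨key, fun R => by rw [show (t ^ 5) ^ 2 = t ^ 10 by ring, key]⟩
end

section
/- Let t ∈ ℚ with t ∉ {−1, 0, 1}, and let a, b, U, V ∈ ℚ satisfy U² = a t² + b t + a and V² = a t⁶ + b t³ + a. Then a t¹⁴ + b t⁷ + a = −t²(1 + t² + t⁴ + t⁶ + t⁸)U² + (1 + t⁴)(1 + t² + t⁴)V². Consequently, a point (t⁷, S) with S ∈ ℚ lies on the conic y² = a x² + b x + a if and only if S² = −t²(1 + t² + t⁴ + t⁶ + t⁸)U² + (1 + t⁴)(1 + t² + t⁴)V². -/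
/-- If `(t, U)` and `(t³, V)` are rational points on the conic
`y² = a·x² + b·x + a`, with `t ∉ {-1, 0, 1}`, then
`a·t¹⁴ + b·t⁷ + a = -t²(1+t²+t⁴+t⁶+t⁸)U² + (1+t⁴)(1+t²+t⁴)V²`; consequently
`(t⁷, S)` lies on the conic if and only if
`S² = -t²(1+t²+t⁴+t⁶+t⁸)U² + (1+t⁴)(1+t²+t⁴)V²`. -/
theorem seventh_power_point_condition
    (t a b U V : ℚ) (ht1 : t ≠ -1) (ht0 : t ≠ 0) (ht2 : t ≠ 1)
    (hU : U ^ 2 = a * t ^ 2 + b * t + a)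
    (hV : V ^ 2 = a * t ^ 6 + b * t ^ 3 + a) :
    a * t ^ 14 + b * t ^ 7 + a
      = -t ^ 2 * (1 + t ^ 2 + t ^ 4 + t ^ 6 + t ^ 8) * U ^ 2
        + (1 + t ^ 4) * (1 + t ^ 2 + t ^ 4) * V ^ 2 ∧
    ∀ S : ℚ, S ^ 2 = a * (t ^ 7) ^ 2 + b * t ^ 7 + a ↔
      S ^ 2 = -t ^ 2 * (1 + t ^ 2 + t ^ 4 + t ^ 6 + t ^ 8) * U ^ 2
        + (1 + t ^ 4) * (1 + t ^ 2 + t ^ 4) * V ^ 2 := by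
  have key : a * t ^ 14 + b * t ^ 7 + a
      = -t ^ 2 * (1 + t ^ 2 + t ^ 4 + t ^ 6 + t ^ 8) * U ^ 2
        + (1 + t ^ 4) * (1 + t ^ 2 + t ^ 4) * V ^ 2 := by
    rw [hU, hV]; ring
  exact ⟨key, fun S => by rw [show a * (t ^ 7) ^ 2 = a * t ^ 14 by ring, key]⟩
end

section
/- Let t ∈ ℚ with t ∉ {−1, 0, 1}, and let a, b, U, V ∈ ℚ satisfy U² = a t² + b t + a and V² = a t⁶ + b t³ + a. Then a t¹⁸ + b t⁹ + a = −t²(1 + t² + t⁴)(1 + t⁴ + t⁸)U² + (1 + t⁴)(1 + t² + t⁴ + t⁶ + t⁸)V². Consequently, a point (t⁹, S′) with S′ ∈ ℚ lies on the conic y² = a x² + b x + a if and only if S′² = −t²(1 + t² + t⁴)(1 + t⁴ + t⁸)U² + (1 + t⁴)(1 + t² + t⁴ + t⁶ + t⁸)V². -/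
/-- If `(t, U)` and `(t³, V)` are rational points on the conic
`y² = a·x² + b·x + a`, with `t ∉ {-1, 0, 1}`, then
`a·t¹⁸ + b·t⁹ + a = -t²(1+t²+t⁴)(1+t⁴+t⁸)U² + (1+t⁴)(1+t²+t⁴+t⁶+t⁸)V²`;
consequently `(t⁹, S′)` lies on the conic if and only if
`S′² = -t²(1+t²+t⁴)(1+t⁴+t⁸)U² + (1+t⁴)(1+t²+t⁴+t⁶+t⁸)V²`. -/
theorem ninth_power_point_condition
    (t a b U V : ℚ) (ht1 : t ≠ -1) (ht0 : t ≠ 0) (ht2 : t ≠ 1)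
    (hU : U ^ 2 = a * t ^ 2 + b * t + a)
    (hV : V ^ 2 = a * t ^ 6 + b * t ^ 3 + a) :
    a * t ^ 18 + b * t ^ 9 + a
      = -t ^ 2 * (1 + t ^ 2 + t ^ 4) * (1 + t ^ 4 + t ^ 8) * U ^ 2
        + (1 + t ^ 4) * (1 + t ^ 2 + t ^ 4 + t ^ 6 + t ^ 8) * V ^ 2 ∧
    ∀ S' : ℚ, S' ^ 2 = a * (t ^ 9) ^ 2 + b * t ^ 9 + a ↔
      S' ^ 2 = -t ^ 2 * (1 + t ^ 2 + t ^ 4) * (1 + t ^ 4 + t ^ 8) * U ^ 2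
        + (1 + t ^ 4) * (1 + t ^ 2 + t ^ 4 + t ^ 6 + t ^ 8) * V ^ 2 := by
  have key : a * t ^ 18 + b * t ^ 9 + a
      = -t ^ 2 * (1 + t ^ 2 + t ^ 4) * (1 + t ^ 4 + t ^ 8) * U ^ 2
        + (1 + t ^ 4) * (1 + t ^ 2 + t ^ 4 + t ^ 6 + t ^ 8) * V ^ 2 := by
    rw [hU, hV]; ring
  refine ⟨key, fun S' => ?_⟩
  rw [← key]; ring_nf
end

section
/- For every t ∈ ℚ with t ∉ {−1, 0, 1}, the set {(U, R) ∈ ℚ × ℚ : R² = −t²(t⁴ + 1)U² + (1 + t² + t⁴)} is infinite. In particular, the conic 𝒞 : R² = −t²(t⁴ + 1)U² + (1 + t² + t⁴)V² has infinitely many rational points (U : V : R); one of them is (U, V, R) = (1, t, t²). -/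
/-- Family of rational points on the conic, obtained by intersecting lines of
slope `m n = (n+1) - (t⁴+1)` through the base point `(1/t, t)` with the conic. -/
noncomputable def conicFamily (t : ℚ) (n : ℕ) : ℚ × ℚ :=
  let a : ℚ := t ^ 2 * (t ^ 4 + 1)
  let m : ℚ := (n + 1 : ℚ) - (t ^ 4 + 1)
  let s : ℚ := -2 * t * (n + 1) / (m ^ 2 + a)
  (1 / t + s, t + m * s)

/-- For `t ∉ {-1, 0, 1}`, the conic `R² = -t²(t⁴+1)U² + (1+t²+t⁴)V²` has
infinitely many rational points: the set of its affine points (with `V = 1`)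
is infinite, and `(U, V, R) = (1, t, t²)` is a point on it. -/
theorem conic_has_infinitely_many_points
    (t : ℚ) (ht1 : t ≠ -1) (ht0 : t ≠ 0) (ht2 : t ≠ 1) :
    {P : ℚ × ℚ | P.2 ^ 2 = -t ^ 2 * (t ^ 4 + 1) * P.1 ^ 2
      + (1 + t ^ 2 + t ^ 4)}.Infinite ∧
    (t ^ 2) ^ 2 = -t ^ 2 * (t ^ 4 + 1) * 1 ^ 2 + (1 + t ^ 2 + t ^ 4) * t ^ 2 := by
  have ha : (0 : ℚ) < t ^ 2 * (t ^ 4 + 1) := by positivity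
  have hd : ∀ n : ℕ, ((n + 1 : ℚ) - (t ^ 4 + 1)) ^ 2 + t ^ 2 * (t ^ 4 + 1) ≠ 0 := by
    intro n
    positivity
  have hs : ∀ n : ℕ,
      (-2 * t * (n + 1) / (((n + 1 : ℚ) - (t ^ 4 + 1)) ^ 2 + t ^ 2 * (t ^ 4 + 1))) ≠ 0 := by
    intro n
    have hn : ((n : ℚ) + 1) ≠ 0 := by positivity
    exact div_ne_zero (by simp [ht0, hn]) (hd n)
  constructor
  · apply Set.infinite_of_injective_forall_mem (f := conicFamily t)
    · intro n1 n2 h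
      simp only [conicFamily, Prod.mk.injEq] at h
      obtain ⟨h1, h2⟩ := h
      have hseq : (-2 * t * (n1 + 1) / (((n1 + 1 : ℚ) - (t ^ 4 + 1)) ^ 2 + t ^ 2 * (t ^ 4 + 1)))
          = (-2 * t * (n2 + 1) / (((n2 + 1 : ℚ) - (t ^ 4 + 1)) ^ 2 + t ^ 2 * (t ^ 4 + 1))) := by
        linarith [h1]
      rw [← hseq] at h2
      have h3 : (((n1 + 1 : ℚ) - (t ^ 4 + 1)) - ((n2 + 1 : ℚ) - (t ^ 4 + 1))) *
          (-2 * t * (n1 + 1) / (((n1 + 1 : ℚ) - (t ^ 4 + 1)) ^ 2 + t ^ 2 * (t ^ 4 + 1))) = 0 := by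
        linear_combination h2
      rcases mul_eq_zero.mp h3 with h4 | h4
      · have : (n1 : ℚ) = n2 := by linarith
        exact_mod_cast this
      · exact absurd h4 (hs n1)
    · intro n
      simp only [conicFamily, Set.mem_setOf_eq]
      have hdn := hd n
      field_simp
      ring
  · field_simp
    ring
end

section
/- In the rational function field ℚ(t), set g₂ = (4/3)t⁸(1 + t² + t⁴)²(1 + t² + 4t⁴ + t⁶ + 7t⁸ + t¹⁰ + 4t¹² + t¹⁴ + t¹⁶), g₃ = −(4/27)t¹²(1 + t² + t⁴)⁴(2 + t² + 3t⁴ + 15t⁶ − 9t⁸ + 30t¹⁰ − 9t¹² + 15t¹⁴ + 3t¹⁶ + t¹⁸ + 2t²⁰), X_P = −t⁴(1 + t² + t⁴)²(2 − 5t² − 2t⁴ − 2t⁶ − 2t⁸ − 5t¹⁰ + 2t¹²)/(3(1 + t²)⁴), and Y_P = 4t⁷(1 + t² + t⁴)²(1 + t² + 2t⁴ + 2t⁶ + 3t⁸ + 2t¹⁰ + 3t¹² + 2t¹⁴ + 2t¹⁶ + t¹⁸ + t²⁰)/(1 + t²)⁶. Then Y_P² = 4X_P³ − g₂X_P − g₃,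 i.e. P = (X_P, Y_P) is a ℚ(t)-rational point on the curve ℰ : Y² = 4X³ − g₂X − g₃. -/
set_option maxHeartbeats 4000000 in
/-- The point `P = (X_P, Y_P)` is a `ℚ(t)`-rational point on the curve
`ℰ : Y² = 4X³ - g₂X - g₃`. -/
theorem point_on_jacobian_E :
    let t : RatFunc ℚ := RatFunc.X
    let g₂ : RatFunc ℚ :=
      (4 / 3) * t ^ 8 * (1 + t ^ 2 + t ^ 4) ^ 2 *
        (1 + t ^ 2 + 4 * t ^ 4 + t ^ 6 + 7 * t ^ 8 + t ^ 10 + 4 * t ^ 12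
          + t ^ 14 + t ^ 16)
    let g₃ : RatFunc ℚ :=
      -(4 / 27) * t ^ 12 * (1 + t ^ 2 + t ^ 4) ^ 4 *
        (2 + t ^ 2 + 3 * t ^ 4 + 15 * t ^ 6 - 9 * t ^ 8 + 30 * t ^ 10
          - 9 * t ^ 12 + 15 * t ^ 14 + 3 * t ^ 16 + t ^ 18 + 2 * t ^ 20)
    let X_P : RatFunc ℚ :=
      -t ^ 4 * (1 + t ^ 2 + t ^ 4) ^ 2 *
        (2 - 5 * t ^ 2 - 2 * t ^ 4 - 2 * t ^ 6 - 2 * t ^ 8 - 5 * t ^ 10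
          + 2 * t ^ 12) / (3 * (1 + t ^ 2) ^ 4)
    let Y_P : RatFunc ℚ :=
      4 * t ^ 7 * (1 + t ^ 2 + t ^ 4) ^ 2 *
        (1 + t ^ 2 + 2 * t ^ 4 + 2 * t ^ 6 + 3 * t ^ 8 + 2 * t ^ 10
          + 3 * t ^ 12 + 2 * t ^ 14 + 2 * t ^ 16 + t ^ 18 + t ^ 20) /
        (1 + t ^ 2) ^ 6
    Y_P ^ 2 = 4 * X_P ^ 3 - g₂ * X_P - g₃ := by
  intro t g₂ g₃ X_P Y_P
  have ht : t = algebraMap (Polynomial ℚ) (RatFunc ℚ) Polynomial.X := rfl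
  have h1 : (1 + t ^ 2) ≠ 0 := by
    rw [ht, ← map_pow, ← map_one (algebraMap (Polynomial ℚ) (RatFunc ℚ)), ← map_add]
    apply RatFunc.algebraMap_ne_zero
    intro h
    have := congrArg (Polynomial.eval 0) h
    simp at this
  have h3 : (3 : RatFunc ℚ) ≠ 0 := by
    have : ((algebraMap (Polynomial ℚ) (RatFunc ℚ)) 3) ≠ 0 :=
      RatFunc.algebraMap_ne_zero (by norm_num)
    rwa [map_ofNat] at this
  have hA : (3 * (1 + t ^ 2) ^ 4 : RatFunc ℚ) ≠ 0 := mul_ne_zero h3 (pow_ne_zero _ h1)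
  have hB : ((1 + t ^ 2) ^ 6 : RatFunc ℚ) ≠ 0 := pow_ne_zero _ h1
  have h27 : (27 : RatFunc ℚ) ≠ 0 := by
    have h : (27 : RatFunc ℚ) = 3 ^ 3 := by norm_num
    rw [h]; exact pow_ne_zero _ h3
  simp only [g₂, g₃, X_P, Y_P]
  field_simp
  ring
end

section
/- Let W be the Weierstrass curve y² = x³ − (g₂/4)x − (g₃/4) over the rational function field ℚ(t), where g₂ = (4/3)t⁸(1 + t² + t⁴)²(1 + t² + 4t⁴ + t⁶ + 7t⁸ + t¹⁰ + 4t¹² + t¹⁴ + t¹⁶) and g₃ = −(4/27)t¹²(1 + t² + t⁴)⁴(2 + t² + 3t⁴ + 15t⁶ − 9t⁸ + 30t¹⁰ − 9t¹² + 15t¹⁴ + 3t¹⁶ + t¹⁸ + 2t²⁰). Let P be the point on W with x-coordinate X_P = −t⁴(1 + t² + t⁴)²(2 − 5t² − 2t⁴ − 2t⁶ − 2t⁸ − 5t¹⁰ + 2t¹²)/(3(1 + t²)⁴) and y-coordinate Y_P/2, where Y_P = 4t⁷(1 + t² + t⁴)²(1 + t² + 2t⁴ + 2t⁶ + 3t⁸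 + 2t¹⁰ + 3t¹² + 2t¹⁴ + 2t¹⁶ + t¹⁸ + t²⁰)/(1 + t²)⁶. Then P has infinite order in the group W(ℚ(t)): for every positive integer n, n • P ≠ O. In particular, W(ℚ(t)) has rank at least 1. -/
/-!
Specialize at the place `t = i` of `ℚ(t)`, i.e. at the prime `π = 1 + t²`. In the rescaled
coordinates `(π⁴x, π⁶y)` the curve `W` reduces there to the cusp `Y² = X³`, whose smooth points
form the additive group `𝔾ₐ` through `(X, Y) ↦ X / Y`. The point `P` reduces to `(-4, -8i)`,
with parameter `u = -i/2`. Chord and tangent formulas are compatible with reduction, so by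
induction `nP` is an affine point reducing to the parameter `n u ≠ 0`; in particular `nP ≠ O`.
-/

open Polynomial

namespace RatFunc

variable {k L : Type*} [Field k] [Field L] [Algebra k L]

def HasValueAt (f : RatFunc k) (c z : L) : Prop :=
  ∃ p q : k[X], aeval z q ≠ 0 ∧
    f = algebraMap k[X] (RatFunc k) p / algebraMap k[X] (RatFunc k) q ∧
    c = aeval z p / aeval z q

variable {f g : RatFunc k} {c d z : L}

lemma algebraMap_ne_zero_of_aeval_ne_zero {q : k[X]} (hq : aeval z q ≠ 0) :
    algebraMap k[X] (RatFunc k) q ≠ 0 :=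
  algebraMap_ne_zero (by rintro rfl; exact hq (map_zero _))

lemma hasValueAt_algebraMap (p : k[X]) (z : L) :
    (algebraMap k[X] (RatFunc k) p).HasValueAt (aeval z p) z :=
  ⟨p, 1, by simp, by simp, by simp⟩

lemma hasValueAt_natCast (n : ℕ) (z : L) : (n : RatFunc k).HasValueAt (n : L) z := by
  simpa using hasValueAt_algebraMap (n : k[X]) z

lemma hasValueAt_zero (z : L) : (0 : RatFunc k).HasValueAt 0 z := by
  simpa using hasValueAt_algebraMap (0 : k[X]) z

namespace HasValueAt

lemma mul (hf : f.HasValueAt c z) (hg : g.HasValueAt d z) : (f * g).HasValueAt (c * d) z := by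
  obtain ⟨p₁, q₁, hq₁, rfl, rfl⟩ := hf
  obtain ⟨p₂, q₂, hq₂, rfl, rfl⟩ := hg
  exact ⟨p₁ * p₂, q₁ * q₂, by simp [hq₁, hq₂], by simp [div_mul_div_comm],
    by simp [div_mul_div_comm]⟩

lemma add (hf : f.HasValueAt c z) (hg : g.HasValueAt d z) : (f + g).HasValueAt (c + d) z := by
  obtain ⟨p₁, q₁, hq₁, rfl, rfl⟩ := hf
  obtain ⟨p₂, q₂, hq₂, rfl, rfl⟩ := hg
  refine ⟨p₁ * q₂ + q₁ * p₂, q₁ * q₂, by simp [hq₁, hq₂], ?_, ?_⟩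
  · simp [div_add_div _ _ (algebraMap_ne_zero_of_aeval_ne_zero hq₁)
      (algebraMap_ne_zero_of_aeval_ne_zero hq₂)]
  · simp [div_add_div _ _ hq₁ hq₂]

lemma neg (hf : f.HasValueAt c z) : (-f).HasValueAt (-c) z := by
  obtain ⟨p, q, hq, rfl, rfl⟩ := hf
  exact ⟨-p, q, hq, by simp [neg_div], by simp [neg_div]⟩

lemma sub (hf : f.HasValueAt c z) (hg : g.HasValueAt d z) : (f - g).HasValueAt (c - d) z := by
  simpa [sub_eq_add_neg] using hf.add hg.neg

lemma pow (hf : f.HasValueAt c z) (n : ℕ) : (f ^ n).HasValueAt (c ^ n) z := by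
  induction n with
  | zero => simpa using hasValueAt_algebraMap (1 : k[X]) z
  | succ n ih => simpa [pow_succ] using ih.mul hf

lemma unique (hc : f.HasValueAt c z) (hd : f.HasValueAt d z) : c = d := by
  obtain ⟨p₁, q₁, hq₁, rfl, rfl⟩ := hc
  obtain ⟨p₂, q₂, hq₂, hf, rfl⟩ := hd
  rw [div_eq_div_iff (algebraMap_ne_zero_of_aeval_ne_zero hq₁)
    (algebraMap_ne_zero_of_aeval_ne_zero hq₂), ← map_mul, ← map_mul] at hf
  rw [div_eq_div_iff hq₁ hq₂, ← map_mul, ← map_mul, algebraMap_injective k hf]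

lemma ne_of_ne (hf : f.HasValueAt c z) (hg : g.HasValueAt d z) (hcd : c ≠ d) : f ≠ g := by
  rintro rfl
  exact hcd (hf.unique hg)

lemma ne_zero (hf : f.HasValueAt c z) (hc : c ≠ 0) : f ≠ 0 :=
  hf.ne_of_ne (hasValueAt_zero z) hc

lemma inv (hf : f.HasValueAt c z) (hc : c ≠ 0) : f⁻¹.HasValueAt c⁻¹ z := by
  obtain ⟨p, q, hq, rfl, rfl⟩ := hf
  exact ⟨q, p, (div_ne_zero_iff.mp hc).1, by simp, by simp⟩

lemma div (hf : f.HasValueAt c z) (hg : g.HasValueAt d z) (hd : d ≠ 0) :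
    (f / g).HasValueAt (c / d) z := by
  simpa [div_eq_mul_inv] using hf.mul (hg.inv hd)

end HasValueAt

end RatFunc

namespace WeierstrassCurve.Affine

open RatFunc

variable {k L : Type*} [Field k] [Field L] [Algebra k L]
  {W : Affine (RatFunc k)} {π : RatFunc k} {z : L}

variable (W π z) in
/-- In the coordinates `(π⁴x, π⁶y)`, `W` specializes at `z` to the cusp `Y² = X³`. The condition
on `a₆` is left out: it is forced by any point satisfying `HasCuspParam`. -/
structure HasCuspidalReductionAt : Prop where
  a₁ : (π ^ 2 * W.a₁).HasValueAt 0 z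
  a₂ : (π ^ 4 * W.a₂).HasValueAt 0 z
  a₃ : (π ^ 6 * W.a₃).HasValueAt 0 z
  a₄ : (π ^ 8 * W.a₄).HasValueAt 0 z

variable (W π z) in
/-- `u = X / Y` identifies the smooth points of the cusp `Y² = X³` with the additive group. -/
def HasCuspParam (Q : W.Point) (u : L) : Prop :=
  ∃ x y, ∃ h : W.Nonsingular x y, Q = .some x y h ∧
    (π ^ 4 * x).HasValueAt (u ^ 2)⁻¹ z ∧ (π ^ 6 * y).HasValueAt (u ^ 3)⁻¹ z

namespace HasCuspidalReductionAt

lemma hasValueAt_sub_negY (hW : W.HasCuspidalReductionAt π z) {x y : RatFunc k} {c d : L}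
    (hx : (π ^ 4 * x).HasValueAt c z) (hy : (π ^ 6 * y).HasValueAt d z) :
    (π ^ 6 * (y - W.negY x y)).HasValueAt (2 * d) z := by
  convert (((hasValueAt_natCast 2 z).mul hy).add (hW.a₁.mul hx)).add hW.a₃ using 1
  · simp only [negY]; ring
  · ring

lemma ne_negY (hW : W.HasCuspidalReductionAt π z) {x y : RatFunc k} {c d : L}
    (hx : (π ^ 4 * x).HasValueAt c z) (hy : (π ^ 6 * y).HasValueAt d z) (hd : 2 * d ≠ 0) :
    y ≠ W.negY x y :=
  sub_ne_zero.1 (right_ne_zero_of_mul ((hW.hasValueAt_sub_negY hx hy).ne_zero hd))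

/-- `(u² + uv + v²) / (uv(u + v))` is the slope of the chord (the tangent if `u = v`) of the cusp
through the points with parameters `u` and `v`. -/
lemma hasCuspParam_add_of_slope [DecidableEq (RatFunc k)] (hW : W.HasCuspidalReductionAt π z)
    {x₁ y₁ x₂ y₂ : RatFunc k} {h₁ : W.Nonsingular x₁ y₁} {h₂ : W.Nonsingular x₂ y₂}
    (hxy : ¬(x₁ = x₂ ∧ y₁ = W.negY x₂ y₂)) {u v : L}
    (hx₁ : (π ^ 4 * x₁).HasValueAt (u ^ 2)⁻¹ z) (hy₁ : (π ^ 6 * y₁).HasValueAt (u ^ 3)⁻¹ z)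
    (hx₂ : (π ^ 4 * x₂).HasValueAt (v ^ 2)⁻¹ z) (hu : u ≠ 0) (hv : v ≠ 0) (huv : u + v ≠ 0)
    (hℓ : (π ^ 2 * W.slope x₁ x₂ y₁ y₂).HasValueAt
      ((u ^ 2 + u * v + v ^ 2) / (u * v * (u + v))) z) :
    W.HasCuspParam π z (.some _ _ h₁ + .some _ _ h₂) (u + v) := by
  have hX : (π ^ 4 * W.addX x₁ x₂ (W.slope x₁ x₂ y₁ y₂)).HasValueAt ((u + v) ^ 2)⁻¹ z := by
    convert ((((hℓ.pow 2).add (hW.a₁.mul hℓ)).sub hW.a₂).sub hx₁).sub hx₂ using 1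
    · simp only [addX]; ring
    · field_simp; ring
  have hY : (π ^ 6 * W.addY x₁ x₂ y₁ (W.slope x₁ x₂ y₁ y₂)).HasValueAt ((u + v) ^ 3)⁻¹ z := by
    convert ((((hℓ.mul (hX.sub hx₁)).add hy₁).neg.sub (hW.a₁.mul hX)).sub hW.a₃) using 1
    · simp only [addY, negAddY, negY]; ring
    · field_simp; ring
  exact ⟨_, _, _, Point.add_some hxy, hX, hY⟩

end HasCuspidalReductionAt

namespace HasCuspParam

variable {Q R : W.Point} {u v : L}

lemma ne_zero (hQ : W.HasCuspParam π z Q u) : Q ≠ 0 := by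
  obtain ⟨x, y, h, rfl, -⟩ := hQ
  exact Point.some_ne_zero h

variable [DecidableEq (RatFunc k)]

lemma add (hW : W.HasCuspidalReductionAt π z) (hπ : π ≠ 0) (hQ : W.HasCuspParam π z Q u)
    (hR : W.HasCuspParam π z R v) (hu : u ≠ 0) (hv : v ≠ 0) (huv : u ^ 2 ≠ v ^ 2) :
    W.HasCuspParam π z (Q + R) (u + v) := by
  obtain ⟨x₁, y₁, h₁, rfl, hx₁, hy₁⟩ := hQ
  obtain ⟨x₂, y₂, h₂, rfl, hx₂, hy₂⟩ := hR
  have hc : (u ^ 2)⁻¹ - (v ^ 2)⁻¹ ≠ 0 := by rwa [sub_ne_zero, ne_eq, inv_inj]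
  have hx : x₁ ≠ x₂ := by
    rintro rfl
    exact hc (sub_eq_zero.2 (hx₁.unique hx₂))
  have hslope : π ^ 2 * W.slope x₁ x₂ y₁ y₂
      = (π ^ 6 * y₁ - π ^ 6 * y₂) / (π ^ 4 * x₁ - π ^ 4 * x₂) := by
    rw [slope_of_X_ne hx]
    field_simp [sub_ne_zero.2 hx]
  have huv' : u + v ≠ 0 := fun h => huv (by linear_combination (u - v) * h)
  refine hW.hasCuspParam_add_of_slope (fun h => hx h.1) hx₁ hy₁ hx₂ hu hv huv' ?_
  rw [hslope]
  convert (hy₁.sub hy₂).div (hx₁.sub hx₂) hc using 1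
  field_simp
  ring

lemma add_self (hW : W.HasCuspidalReductionAt π z) (hπ : π ≠ 0) (h2 : (2 : L) ≠ 0)
    (hQ : W.HasCuspParam π z Q u) (hu : u ≠ 0) : W.HasCuspParam π z (Q + Q) (u + u) := by
  obtain ⟨x, y, h, rfl, hx, hy⟩ := hQ
  have hd : 2 * (u ^ 3)⁻¹ ≠ 0 := by simp [h2, hu]
  have hy' := hW.ne_negY hx hy hd
  have hslope : π ^ 2 * W.slope x x y y
      = (3 * (π ^ 4 * x) ^ 2 + 2 * (π ^ 4 * W.a₂) * (π ^ 4 * x) + π ^ 8 * W.a₄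
          - π ^ 2 * W.a₁ * (π ^ 6 * y)) / (π ^ 6 * (y - W.negY x y)) := by
    rw [slope_of_Y_ne rfl hy']
    field_simp [sub_ne_zero.2 hy']
  have huu : u + u ≠ 0 := by simpa [← two_mul] using ⟨h2, hu⟩
  refine hW.hasCuspParam_add_of_slope (fun h => hy' h.2) hx hy hx hu hu huu ?_
  rw [hslope]
  convert ((((hasValueAt_natCast 3 z).mul (hx.pow 2)).add
    (((hasValueAt_natCast 2 z).mul hW.a₂).mul hx)).add hW.a₄ |>.sub
    (hW.a₁.mul hy)).div (hW.hasValueAt_sub_negY hx hy) hd using 1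
  · push_cast
    ring
  · rw [div_eq_div_iff (by simp [hu, huu]) hd]
    push_cast
    field_simp
    ring

lemma nsmul [CharZero L] (hW : W.HasCuspidalReductionAt π z) (hπ : π ≠ 0)
    (hQ : W.HasCuspParam π z Q u) (hu : u ≠ 0) {n : ℕ} (hn : 0 < n) :
    W.HasCuspParam π z (n • Q) (n * u) := by
  induction n, hn using Nat.le_induction with
  | base => simpa using hQ
  | succ n hn ih =>
    rw [succ_nsmul, Nat.cast_succ, add_one_mul]
    rcases hn.eq_or_lt with rfl | hn
    · simpa using hQ.add_self hW hπ two_ne_zero hu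
    · refine ih.add hW hπ hQ (mul_ne_zero (Nat.cast_ne_zero.2 (by omega)) hu) hu ?_
      rw [mul_pow, Ne, mul_eq_right₀ (pow_ne_zero 2 hu)]
      exact_mod_cast (Nat.one_lt_pow two_ne_zero hn).ne'

end HasCuspParam

end WeierstrassCurve.Affine

namespace PointOfInfiniteOrder

open RatFunc (hasValueAt_algebraMap hasValueAt_zero algebraMap_X)
open WeierstrassCurve.Affine

noncomputable def t : RatFunc ℚ := RatFunc.X

noncomputable def g₂ : RatFunc ℚ :=
  (4 / 3) * t ^ 8 * (1 + t ^ 2 + t ^ 4) ^ 2 *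
    (1 + t ^ 2 + 4 * t ^ 4 + t ^ 6 + 7 * t ^ 8 + t ^ 10 + 4 * t ^ 12 + t ^ 14 + t ^ 16)

noncomputable def g₃ : RatFunc ℚ :=
  -(4 / 27) * t ^ 12 * (1 + t ^ 2 + t ^ 4) ^ 4 *
    (2 + t ^ 2 + 3 * t ^ 4 + 15 * t ^ 6 - 9 * t ^ 8 + 30 * t ^ 10
      - 9 * t ^ 12 + 15 * t ^ 14 + 3 * t ^ 16 + t ^ 18 + 2 * t ^ 20)

noncomputable def X_P : RatFunc ℚ :=
  -t ^ 4 * (1 + t ^ 2 + t ^ 4) ^ 2 *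
    (2 - 5 * t ^ 2 - 2 * t ^ 4 - 2 * t ^ 6 - 2 * t ^ 8 - 5 * t ^ 10 + 2 * t ^ 12) /
    (3 * (1 + t ^ 2) ^ 4)

noncomputable def Y_P : RatFunc ℚ :=
  4 * t ^ 7 * (1 + t ^ 2 + t ^ 4) ^ 2 *
    (1 + t ^ 2 + 2 * t ^ 4 + 2 * t ^ 6 + 3 * t ^ 8 + 2 * t ^ 10
      + 3 * t ^ 12 + 2 * t ^ 14 + 2 * t ^ 16 + t ^ 18 + t ^ 20) /
    (1 + t ^ 2) ^ 6

noncomputable def W : WeierstrassCurve.Affine (RatFunc ℚ) :=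
  { a₁ := 0, a₂ := 0, a₃ := 0, a₄ := -g₂ / 4, a₆ := -g₃ / 4 }

noncomputable def π : RatFunc ℚ := 1 + t ^ 2

lemma π_eq_algebraMap : π = algebraMap ℚ[X] (RatFunc ℚ) (1 + X ^ 2) := by
  simp [π, t]

lemma π_ne_zero : π ≠ 0 :=
  π_eq_algebraMap ▸ (hasValueAt_algebraMap (1 + X ^ 2) (0 : ℚ)).ne_zero (by simp)

lemma hasValueAt_π : π.HasValueAt 0 Complex.I := by
  rw [π_eq_algebraMap]
  convert hasValueAt_algebraMap (1 + X ^ 2) Complex.I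
  simp

lemma hasCuspidalReductionAt : W.HasCuspidalReductionAt π Complex.I := by
  obtain ⟨c, ha₄⟩ : ∃ c : ℂ, W.a₄.HasValueAt c Complex.I :=
    ⟨_, -(X ^ 8 * (1 + X ^ 2 + X ^ 4) ^ 2 *
      (1 + X ^ 2 + 4 * X ^ 4 + X ^ 6 + 7 * X ^ 8 + X ^ 10 + 4 * X ^ 12 + X ^ 14 + X ^ 16)), 3,
      by simp [map_ofNat], by simp only [W, g₂, t, map_mul, map_add, map_neg, map_pow, map_one,
        map_ofNat, algebraMap_X]; ring, rfl⟩
  exact ⟨by simpa [W] using hasValueAt_zero _, by simpa [W] using hasValueAt_zero _,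
    by simpa [W] using hasValueAt_zero _, by simpa using (hasValueAt_π.pow 8).mul ha₄⟩

lemma hasValueAt_X_P : (π ^ 4 * X_P).HasValueAt (((-Complex.I / 2) ^ 2)⁻¹) Complex.I := by
  refine ⟨-X ^ 4 * (1 + X ^ 2 + X ^ 4) ^ 2 *
    (2 - 5 * X ^ 2 - 2 * X ^ 4 - 2 * X ^ 6 - 2 * X ^ 8 - 5 * X ^ 10 + 2 * X ^ 12), 3,
    by simp [map_ofNat], ?_, ?_⟩
  · have := π_ne_zero
    simp only [π, X_P, t, map_mul, map_add, map_sub, map_neg, map_pow, map_one, map_ofNat,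
      algebraMap_X] at this ⊢
    field_simp
  · simp [map_ofNat]
    grind [Complex.I_sq]

lemma hasValueAt_Y_P : (π ^ 6 * (Y_P / 2)).HasValueAt (((-Complex.I / 2) ^ 3)⁻¹) Complex.I := by
  refine ⟨4 * X ^ 7 * (1 + X ^ 2 + X ^ 4) ^ 2 *
    (1 + X ^ 2 + 2 * X ^ 4 + 2 * X ^ 6 + 3 * X ^ 8 + 2 * X ^ 10
      + 3 * X ^ 12 + 2 * X ^ 14 + 2 * X ^ 16 + X ^ 18 + X ^ 20), 2, by simp [map_ofNat], ?_, ?_⟩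
  · have := π_ne_zero
    simp only [π, Y_P, t, map_mul, map_add, map_pow, map_one, map_ofNat, algebraMap_X] at this ⊢
    field_simp
  · simp [map_ofNat]
    grind [Complex.I_sq]

lemma equation_P : W.Equation X_P (Y_P / 2) := by
  have := π_ne_zero
  rw [equation_iff]
  simp only [W, g₂, g₃, X_P, Y_P, π] at this ⊢
  field_simp
  ring

lemma nonsingular_P : W.Nonsingular X_P (Y_P / 2) :=
  (nonsingular_iff _ _).2 ⟨equation_P, Or.inr <|
    hasCuspidalReductionAt.ne_negY hasValueAt_X_P hasValueAt_Y_P (by simp)⟩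

lemma hasCuspParam_P :
    W.HasCuspParam π Complex.I (.some _ _ nonsingular_P) (-Complex.I / 2) :=
  ⟨_, _, _, rfl, hasValueAt_X_P, hasValueAt_Y_P⟩

end PointOfInfiniteOrder

open Classical in
/-- The point `P = (X_P, Y_P/2)` on the Weierstrass curve
`W : y² = x³ - (g₂/4)x - (g₃/4)` over `ℚ(t)` has infinite order in the group
`W(ℚ(t))`; in particular `W(ℚ(t))` has rank at least 1. -/
theorem point_of_infinite_order_on_W :
    let t : RatFunc ℚ := RatFunc.X
    let g₂ : RatFunc ℚ :=
      (4 / 3) * t ^ 8 * (1 + t ^ 2 + t ^ 4) ^ 2 *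
        (1 + t ^ 2 + 4 * t ^ 4 + t ^ 6 + 7 * t ^ 8 + t ^ 10 + 4 * t ^ 12
          + t ^ 14 + t ^ 16)
    let g₃ : RatFunc ℚ :=
      -(4 / 27) * t ^ 12 * (1 + t ^ 2 + t ^ 4) ^ 4 *
        (2 + t ^ 2 + 3 * t ^ 4 + 15 * t ^ 6 - 9 * t ^ 8 + 30 * t ^ 10
          - 9 * t ^ 12 + 15 * t ^ 14 + 3 * t ^ 16 + t ^ 18 + 2 * t ^ 20)
    let X_P : RatFunc ℚ :=
      -t ^ 4 * (1 + t ^ 2 + t ^ 4) ^ 2 *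
        (2 - 5 * t ^ 2 - 2 * t ^ 4 - 2 * t ^ 6 - 2 * t ^ 8 - 5 * t ^ 10
          + 2 * t ^ 12) / (3 * (1 + t ^ 2) ^ 4)
    let Y_P : RatFunc ℚ :=
      4 * t ^ 7 * (1 + t ^ 2 + t ^ 4) ^ 2 *
        (1 + t ^ 2 + 2 * t ^ 4 + 2 * t ^ 6 + 3 * t ^ 8 + 2 * t ^ 10
          + 3 * t ^ 12 + 2 * t ^ 14 + 2 * t ^ 16 + t ^ 18 + t ^ 20) /
        (1 + t ^ 2) ^ 6
    let W : WeierstrassCurve.Affine (RatFunc ℚ) :=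
      { a₁ := 0, a₂ := 0, a₃ := 0, a₄ := -g₂ / 4, a₆ := -g₃ / 4 }
    ∃ h : W.Nonsingular X_P (Y_P / 2),
      ∀ n : ℕ, 0 < n →
        n • (WeierstrassCurve.Affine.Point.some _ _ h) ≠ (0 : W.Point) := by
  exact ⟨PointOfInfiniteOrder.nonsingular_P, fun n hn =>
    (PointOfInfiniteOrder.hasCuspParam_P.nsmul PointOfInfiniteOrder.hasCuspidalReductionAt
      PointOfInfiniteOrder.π_ne_zero (by simp) hn).ne_zero⟩
end

section
/- Let n ≥ 1 be an integer, T ∈ ℚ with T ∉ {−1, 0, 1}, and set a = T^{4n}(1 + T^{2n})(1 + T^{8n}) / (2(1 + T^{4n})(−1 + T^{2n} − T^{4n} + T^{6n} − T^{8n} + T^{10n})²) and b = (1 − 2T^{2n} − T^{4n} − 12T^{6n} − 3T^{8n} − 14T^{10n} − 13T^{12n} − 40T^{14n} − 13T^{16n} − 14T^{18n} − 3T^{20n} − 12T^{22n} − T^{24n} − 2T^{26n} + T^{28n}) / (16T^{3n}(−1 + T^{2n})²(1 + T^{4n})²(1 − T^{2n} + T^{4n})²(1 + T^{2n} + T^{4n})²).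 Write D = 4(1 + 2T^{4n} + 2T^{8n} + T^{12n}). Then the following eight pairs (x, y) all satisfy y² = a x^{2n} + b xⁿ + a: (T^{−7}, (3 + 4T^{2n} + 5T^{4n} + 4T^{6n} + 5T^{8n} + 4T^{10n} + 3T^{12n})/(T^{5n}·D)), (T^{−5}, (1 + 4T^{2n} + 3T^{4n} + 4T^{6n} + 3T^{8n} + 4T^{10n} + T^{12n})/(T^{4n}·D)), (T^{−3}, (1 + 3T^{4n} + 4T^{6n} + 3T^{8n} + T^{12n})/(T^{3n}·D)), (T^{−1}, (−1 + T^{4n} + 4T^{6n} + T^{8n} − T^{12n})/(T^{2n}·D)), (T, (−1 + T^{4n} + 4T^{6n} + T^{8n} − T^{12n})/(Tⁿ·D)), (T³, (1 + 3T^{4n} + 4T^{6n} + 3T^{8n} + T^{12n})/D), (T⁵, Tⁿ(1 + 4T^{2n} + 3T^{4n} + 4T^{6n} + 3T^{8n} + 4T^{10n} + T^{12n})/D), (T⁷, T^{2n}(3 + 4T^{2n} + 5T^{4n} + 4T^{6n} + 5T^{8n} + 4T^{10n} + 3T^{12n})/D). In particular the curve y² = a x^{2n} + b xⁿ + a has an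 8-term geometric progression of rational points with x-coordinates T^{±1}, T^{±3}, T^{±5}, T^{±7}. -/
set_option maxHeartbeats 4000000 in
/-- Explicit 8-term geometric progression of rational points with
`x`-coordinates `T^(±1), T^(±3), T^(±5), T^(±7)` on the curve
`y² = a·x^(2n) + b·xⁿ + a` with the stated coefficients `a(T)`, `b(T)`. -/
theorem explicit_eight_term_gp
    (n : ℕ) (hn : 1 ≤ n) (T : ℚ) (hT1 : T ≠ -1) (hT0 : T ≠ 0) (hT2 : T ≠ 1) :
    let a : ℚ := T ^ (4 * n) * (1 + T ^ (2 * n)) * (1 + T ^ (8 * n)) /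
      (2 * (1 + T ^ (4 * n)) *
        (-1 + T ^ (2 * n) - T ^ (4 * n) + T ^ (6 * n) - T ^ (8 * n)
          + T ^ (10 * n)) ^ 2)
    let b : ℚ := (1 - 2 * T ^ (2 * n) - T ^ (4 * n) - 12 * T ^ (6 * n)
        - 3 * T ^ (8 * n) - 14 * T ^ (10 * n) - 13 * T ^ (12 * n)
        - 40 * T ^ (14 * n) - 13 * T ^ (16 * n) - 14 * T ^ (18 * n)
        - 3 * T ^ (20 * n) - 12 * T ^ (22 * n) - T ^ (24 * n)
        - 2 * T ^ (26 * n) + T ^ (28 * n)) /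
      (16 * T ^ (3 * n) * (-1 + T ^ (2 * n)) ^ 2 * (1 + T ^ (4 * n)) ^ 2 *
        (1 - T ^ (2 * n) + T ^ (4 * n)) ^ 2 *
        (1 + T ^ (2 * n) + T ^ (4 * n)) ^ 2)
    let D : ℚ := 4 * (1 + 2 * T ^ (4 * n) + 2 * T ^ (8 * n) + T ^ (12 * n))
    let N₁ : ℚ := -1 + T ^ (4 * n) + 4 * T ^ (6 * n) + T ^ (8 * n) - T ^ (12 * n)
    let N₃ : ℚ := 1 + 3 * T ^ (4 * n) + 4 * T ^ (6 * n) + 3 * T ^ (8 * n)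
      + T ^ (12 * n)
    let N₅ : ℚ := 1 + 4 * T ^ (2 * n) + 3 * T ^ (4 * n) + 4 * T ^ (6 * n)
      + 3 * T ^ (8 * n) + 4 * T ^ (10 * n) + T ^ (12 * n)
    let N₇ : ℚ := 3 + 4 * T ^ (2 * n) + 5 * T ^ (4 * n) + 4 * T ^ (6 * n)
      + 5 * T ^ (8 * n) + 4 * T ^ (10 * n) + 3 * T ^ (12 * n)
    let OnCurve : ℚ → ℚ → Prop := fun x y =>
      y ^ 2 = a * x ^ (2 * n) + b * x ^ n + a
    OnCurve (T ^ (-7 : ℤ)) (N₇ / (T ^ (5 * n) * D)) ∧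
    OnCurve (T ^ (-5 : ℤ)) (N₅ / (T ^ (4 * n) * D)) ∧
    OnCurve (T ^ (-3 : ℤ)) (N₃ / (T ^ (3 * n) * D)) ∧
    OnCurve (T ^ (-1 : ℤ)) (N₁ / (T ^ (2 * n) * D)) ∧
    OnCurve T (N₁ / (T ^ n * D)) ∧
    OnCurve (T ^ 3) (N₃ / D) ∧
    OnCurve (T ^ 5) (T ^ n * N₅ / D) ∧
    OnCurve (T ^ 7) (T ^ (2 * n) * N₇ / D) := by
  
  intro a b D N₁ N₃ N₅ N₇ OnCurve
  have hn0 : n ≠ 0 := by omega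
  have hone : ∀ m : ℕ, m ≠ 0 → T ^ m ≠ 1 := by
    intro m hm h
    rcases (pow_eq_one_iff_of_ne_zero hm).mp h with h | h
    · exact hT2 h
    · exact hT1 h.1
  have e7 : T ^ (-7 : ℤ) = (T ^ (7:ℕ))⁻¹ := by
    rw [show (-7:ℤ) = -(7:ℕ) by norm_num, zpow_neg, zpow_natCast]
  have e5 : T ^ (-5 : ℤ) = (T ^ (5:ℕ))⁻¹ := by
    rw [show (-5:ℤ) = -(5:ℕ) by norm_num, zpow_neg, zpow_natCast]
  have e3 : T ^ (-3 : ℤ) = (T ^ (3:ℕ))⁻¹ := by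
    rw [show (-3:ℤ) = -(3:ℕ) by norm_num, zpow_neg, zpow_natCast]
  have e1 : T ^ (-1 : ℤ) = (T ^ (1:ℕ))⁻¹ := by
    rw [show (-1:ℤ) = -(1:ℕ) by norm_num, zpow_neg, zpow_natCast]
  simp only [OnCurve, a, b, D, N₁, N₃, N₅, N₇]
  set t := T ^ n with ht
  have E1 : ∀ k : ℕ, T ^ (k * n) = t ^ k := by
    intro k; rw [mul_comm, pow_mul, ← ht]
  have E2 : ∀ j k : ℕ, T ^ (j * (k * n)) = t ^ (j * k) := by
    intro j k; rw [show j * (k * n) = n * (j * k) by ring, pow_mul, ← ht]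
  have ht0 : t ≠ 0 := pow_ne_zero _ hT0
  have hx : ∀ m : ℕ, m ≠ 0 → t ^ m ≠ 1 := by
    intro m hm h
    exact hone (n * m) (Nat.mul_ne_zero hn0 hm) (by rw [pow_mul, ← ht]; exact h)
  have h2 : (-1 + t ^ 2 : ℚ) ≠ 0 := by
    intro h; exact hx 2 two_ne_zero (by linarith)
  have h4 : (1 + t ^ 4 : ℚ) ≠ 0 := by positivity
  have hs : (-1 + t ^ 2 - t ^ 4 + t ^ 6 - t ^ 8 + t ^ 10 : ℚ) ≠ 0 := by
    intro h
    apply hx 12 (by norm_num)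
    have key : t ^ 12 - 1 =
        (-1 + t ^ 2 - t ^ 4 + t ^ 6 - t ^ 8 + t ^ 10) * (1 + t ^ 2) := by ring
    rw [h, zero_mul] at key
    linarith
  have htsq : (0:ℚ) < t ^ 2 := by positivity
  have hm : (1 - t ^ 2 + t ^ 4 : ℚ) ≠ 0 := by
    have : (0:ℚ) < 1 - t ^ 2 + t ^ 4 := by nlinarith [sq_nonneg (t ^ 2 - 1)]
    linarith
  have hp : (1 + t ^ 2 + t ^ 4 : ℚ) ≠ 0 := by positivity
  have hD : (1 + 2 * t ^ 4 + 2 * t ^ 8 + t ^ 12 : ℚ) ≠ 0 := by positivity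
  refine ⟨?_, ?_, ?_, ?_, ?_, ?_, ?_, ?_⟩ <;>
  · simp only [e7, e5, e3, e1, pow_one, inv_pow, ← pow_mul, E2, E1,
      Nat.reduceMul]
    field_simp
    ring
end
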